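/- Let Q be an Ω-algebra, X a set, and τ a Q-topology on X. Let s_τ be the optimal lift of the family of all Q-continuous maps f : (X,τ) → (S,u) into the Q-Sierpinski space, i.e., the Q-topology on X generated by { q ∘ f | f : (X,τ) → (S,u) Q-continuous, q ∈ u }. Then s_τ = τ. -/

import Mathlib

universe u v w x

/-- Closure of a set of `Q`-valued functions on `X` under the pointwise
Ω-algebra operations `ops`. -/
def Closed {Q : Type u} {I : Type v} {n : I → Type w} (ops : ∀ i, (n i → Q) → Q)
    {X : Type x} (B : Set (X → Q)) : Prop :=
  ∀ i (p : n i → X → Q), (∀ j, p j ∈ B) → (fun x => ops i (fun j => p j x)) ∈ B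

/-- A `Q`-topology on `X`: a nonempty subset of `Q^X` closed under the
pointwise operations, i.e. a subalgebra of the power algebra. -/
def IsQTop {Q : Type u} {I : Type v} {n : I → Type w} (ops : ∀ i, (n i → Q) → Q)
    {X : Type x} (τ : Set (X → Q)) : Prop :=
  τ.Nonempty ∧ Closed ops τ

/-- The subalgebra of `Q^X` generated by `S`: the intersection of all
subalgebras containing `S`. -/
def gen {Q : Type u} {I : Type v} {n : I → Type w} (ops : ∀ i, (n i → Q) → Q)
    {X : Type x} (S : Set (X → Q)) : Set (X → Q) :=
  ⋂₀ {B | S ⊆ B ∧ IsQTop ops B}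

/-- `Q`-continuity of `f : (X,τ) → (Y,η)` : preimages `α ∘ f` of members of `η`
belong to `τ`. -/
def QCont {Q : Type u} {I : Type v} {n : I → Type w} (ops : ∀ i, (n i → Q) → Q)
    {X : Type x} {Y : Type x} (τ : Set (X → Q)) (η : Set (Y → Q)) (f : X → Y) : Prop :=
  ∀ α ∈ η, (fun x => α (f x)) ∈ τ

/-- The `Q`-Sierpinski topology on `S = Q`: the subalgebra of `Q^Q` generated
by the identity map. -/
def sierp {Q : Type u} {I : Type v} {n : I → Type w} (ops : ∀ i, (n i → Q) → Q) :
    Set (Q → Q) :=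
  gen ops ({id} : Set (Q → Q))

/-!
A map `f : X → Q` is `Q`-continuous into the `Q`-Sierpinski space exactly when `f ∈ τ`: the
members of `u` whose pullback along `f` lies in `τ` form a `Q`-topology, so continuity needs
checking only on the generator `id`. Hence the generating family of `s_τ` contains `τ`
(take `q = id`) and is contained in `τ` (by continuity), so it generates `τ`.
-/

section Generated

variable {Q : Type u} {I : Type v} {n : I → Type w} (ops : ∀ i, (n i → Q) → Q)

theorem subset_gen {X : Type x} (S : Set (X → Q)) : S ⊆ gen ops S :=
  fun _ hp _ hB => hB.1 hp

theorem gen_subset {X : Type x} {S B : Set (X → Q)} (hSB : S ⊆ B) (hB : IsQTop ops B) :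
    gen ops S ⊆ B :=
  Set.sInter_subset_of_mem ⟨hSB, hB⟩

theorem Closed.preimage_comp {X Y : Type x} {τ : Set (X → Q)} (hτ : Closed ops τ) (f : X → Y) :
    Closed ops {β : Y → Q | (fun x => β (f x)) ∈ τ} :=
  fun i p hp => hτ i (fun j x => p j (f x)) hp

theorem qCont_gen_of_forall_mem {X Y : Type x} {τ : Set (X → Q)} {S : Set (Y → Q)}
    (hτ : Closed ops τ) (hS : S.Nonempty) {f : X → Y}
    (hf : ∀ β ∈ S, (fun x => β (f x)) ∈ τ) : QCont ops τ (gen ops S) f :=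
  gen_subset ops hf ⟨hS.mono hf, hτ.preimage_comp ops f⟩

theorem qCont_sierp_iff {X : Type u} {τ : Set (X → Q)} (hτ : Closed ops τ) {f : X → Q} :
    QCont ops τ (sierp ops) f ↔ f ∈ τ := by
  refine ⟨fun hf => hf id (subset_gen ops _ rfl), fun hf => ?_⟩
  exact qCont_gen_of_forall_mem ops hτ (Set.singleton_nonempty id) fun β hβ => hβ ▸ hf

end Generated

theorem stmt_14 {Q : Type u} {I : Type v} {n : I → Type w} (ops : ∀ i, (n i → Q) → Q)
    {X : Type u} (τ : Set (X → Q)) (hτ : IsQTop ops τ) :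
    gen ops {p : X → Q | ∃ f : X → Q, QCont ops τ (sierp ops) f ∧
      ∃ q ∈ sierp ops, p = fun x => q (f x)} = τ := by
  refine Set.Subset.antisymm (gen_subset ops ?_ hτ) fun α hα => subset_gen ops _ ?_
  · rintro _ ⟨f, hf, q, hq, rfl⟩
    exact hf q hq
  · exact ⟨α, (qCont_sierp_iff ops hτ.2).2 hα, id, subset_gen ops _ rfl, rfl⟩
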